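/- Let C be a category and let X be an object of C such that for every n ≥ 1 the n-fold power Xⁿ (the product of n copies of X) exists in C, and such that every object Y of C admits at least one morphism Y → X. Let X^{•+1} : Δᵒᵖ ⥤ C denote the simplicial object whose value on [n] is the (n+1)-fold power X^{n+1} = ∏_{i ∈ Fin (n+1)} X, and whose structure map associated to a morphism α : [m] → [n] of Δ is the morphism X^{n+1} → X^{m+1} whose i-th component is the projection onto the α(i)-th factor (this is the Čech nerve of the map from X to the terminal object, when a terminal object exists). Then the functor X^{•+1} : Δᵒᵖ ⥤ C is final, i.e., for every functor out of C, restricting a colimit diagram along X^{•+1} preserves the colimit (in Mathlib: CategoryTheory.Functor.Final holds for this functor). -/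

import Mathlib

/-!
An object of the comma category `Y ↓ X^{•+1}` over `[n]` is a tuple `(y₀, …, yₙ)` of maps
`Y ⟶ X`, and the vertex `[0] ⟶ [n]` at `i` gives a map from it to the constant tuple `(yᵢ)`
over `[0]`. Two such constant tuples `(y)` and `(y')` both receive a map from the pair `(y, y')`
over `[1]`, so any two objects are joined by a zigzag; a map `Y ⟶ X` makes the category nonempty.
-/

open CategoryTheory CategoryTheory.Limits

universe v u

variable {C : Type u} [Category.{v} C]

/-- The simplicial object `X^{•+1} : Δᵒᵖ ⥤ C` attached to an object `X` whose
finite powers exist: it sends `[n]` to the `(n+1)`-fold power `∏ X` and a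
morphism `α : [m] ⟶ [n]` of the simplex category to the morphism
`X^{n+1} ⟶ X^{m+1}` whose `i`-th component is the projection onto the
`α i`-th factor.  (This is the Čech nerve of the map from `X` to the terminal
object, when a terminal object exists.) -/
@[simps]
noncomputable def cechPower (X : C) [∀ n : ℕ, HasProduct (fun _ : Fin (n + 1) => X)] :
    SimplexCategoryᵒᵖ ⥤ C where
  obj n := ∏ᶜ (fun _ : Fin (n.unop.len + 1) => X)
  map {n m} α :=
    Pi.lift (fun i : Fin (m.unop.len + 1) =>
      Pi.π (fun _ : Fin (n.unop.len + 1) => X) (α.unop.toOrderHom i))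
  map_id n := by
    ext i
    simp
  map_comp {n m k} α β := by
    ext i
    simp

open Simplicial

namespace cechPower

variable {X : C} [∀ n : ℕ, HasProduct (fun _ : Fin (n + 1) => X)] {Y : C}

noncomputable def vertexArrow (y : Y ⟶ X) : StructuredArrow Y (cechPower X) :=
  StructuredArrow.mk (Y := Opposite.op ⦋0⦌) (Pi.lift fun _ => y)

lemma comp_map_const_op {n : SimplexCategory} (φ : Y ⟶ (cechPower X).obj (Opposite.op n))
    (i : Fin (n.len + 1)) :
    φ ≫ (cechPower X).map (SimplexCategory.const ⦋0⦌ n i).op = Pi.lift fun _ => φ ≫ Pi.π _ i := by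
  refine Pi.hom_ext _ _ fun k => ?_
  simp only [cechPower_map]
  exact (Category.assoc _ _ _).trans <|
    (φ ≫= Pi.lift_π _ k).trans (Pi.lift_π (fun _ => φ ≫ Pi.π _ i) k).symm

lemma zigzag_vertexArrow (j : StructuredArrow Y (cechPower X)) (i : Fin (j.right.unop.len + 1))
    {y : Y ⟶ X} (hy : j.hom ≫ Pi.π _ i = y) : Zigzag j (vertexArrow y) := by
  have f := StructuredArrow.homMk' j (SimplexCategory.const ⦋0⦌ j.right.unop i).op
  rw [comp_map_const_op, hy] at f
  exact Zigzag.of_hom f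

lemma zigzag_vertexArrow_vertexArrow (y y' : Y ⟶ X) :
    Zigzag (vertexArrow y) (vertexArrow y') := by
  let e : StructuredArrow Y (cechPower X) :=
    StructuredArrow.mk (Y := Opposite.op ⦋1⦌) (Pi.lift ![y, y'])
  exact (zigzag_vertexArrow e 0 (Pi.lift_π ![y, y'] 0)).symm.trans
    (zigzag_vertexArrow e 1 (Pi.lift_π ![y, y'] 1))

end cechPower

/-- **Proposition `cofinal` (Section 5.5).**  Let `X : C` be an object such that all
the finite powers `Xⁿ` (`n ≥ 1`) exist in `C` and such that every object `Y` of `C`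
admits a morphism `Y ⟶ X`.  Then the simplicial object `X^{•+1} : Δᵒᵖ ⥤ C` is a
final functor. -/
theorem cechPower_final (X : C) [∀ n : ℕ, HasProduct (fun _ : Fin (n + 1) => X)]
    (h : ∀ Y : C, Nonempty (Y ⟶ X)) :
    (cechPower X).Final where
  out Y := by
    obtain ⟨y⟩ := h Y
    have : Nonempty (StructuredArrow Y (cechPower X)) := ⟨cechPower.vertexArrow y⟩
    refine zigzag_isConnected fun j₁ j₂ => ?_
    exact (cechPower.zigzag_vertexArrow j₁ 0 rfl).trans <|
      (cechPower.zigzag_vertexArrow_vertexArrow _ _).trans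
        (cechPower.zigzag_vertexArrow j₂ 0 rfl).symm
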